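/- arXiv:2108.00881 — 3 statements merged into one kernel-verified Lean document; each statement's English description precedes it below -/
import Mathlib

section
/- There exists a constant C₀ > 0 such that for all x ∈ [0,1] and all t ∈ (0,1], the heat kernel on the torus satisfies G(t,x) ≤ C₀ p(t, x_*), where x_* = x if 0 ≤ x ≤ 1/2 and x_* = x-1 if 1/2 < x ≤ 1. -/
open MeasureTheory Real

/-- The Gaussian heat kernel on `ℝ`. -/
noncomputable def p (t x : ℝ) : ℝ :=
  (Real.sqrt (2 * Real.pi * t))⁻¹ * Real.exp (-(x ^ 2) / (2 * t))

/-- The heat kernel on the torus `𝕋 = ℝ/ℤ`, viewed as a 1-periodic function on `ℝ`. -/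
noncomputable def G (t x : ℝ) : ℝ := ∑' k : ℤ, p t (x + k)

/-- `x_* = x` if `0 ≤ x ≤ 1/2`, and `x_* = x - 1` if `1/2 < x ≤ 1`. -/
noncomputable def xstar (x : ℝ) : ℝ := if x ≤ 1/2 then x else x - 1

lemma summable_aux : Summable (fun k : ℤ => Real.exp (-(((k : ℝ)) ^ 2 - 1) / 8)) := by
  have hnat : Summable (fun n : ℕ => Real.exp (-(((n : ℝ)) ^ 2 - 1) / 8)) := by
    have hg : Summable (fun n : ℕ => Real.exp (1/8) * Real.exp (-(1/8)) ^ n) :=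
      (summable_geometric_of_lt_one (Real.exp_nonneg _)
        (by rw [Real.exp_lt_one_iff]; norm_num)).mul_left _
    refine hg.of_nonneg_of_le (fun n => (Real.exp_pos _).le) (fun n => ?_)
    rw [← Real.exp_nat_mul, ← Real.exp_add, Real.exp_le_exp]
    have : (n : ℝ) ≤ (n : ℝ) ^ 2 := by
      exact_mod_cast Nat.le_self_pow (by norm_num) n
    linarith
  refine Summable.of_nat_of_neg (by simpa using hnat) ?_
  have : (fun n : ℕ => Real.exp (-(((((-n : ℤ)) : ℝ)) ^ 2 - 1) / 8))
      = fun n : ℕ => Real.exp (-(((n : ℝ)) ^ 2 - 1) / 8) := by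
    funext n; push_cast; ring_nf
  simpa [this] using hnat

theorem stmt3 :
    ∃ C₀ : ℝ, 0 < C₀ ∧ ∀ x ∈ Set.Icc (0:ℝ) 1, ∀ t ∈ Set.Ioc (0:ℝ) 1,
      G t x ≤ C₀ * p t (xstar x) := by
  refine ⟨∑' k : ℤ, Real.exp (-(((k : ℝ)) ^ 2 - 1) / 8), ?_, ?_⟩
  · exact Summable.tsum_pos summable_aux (fun k => (Real.exp_pos _).le) 0 (Real.exp_pos _)
  intro x hx t ht
  obtain ⟨hx0, hx1⟩ := hx
  obtain ⟨ht0, ht1⟩ := ht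
  set m := xstar x with hmdef
  have h2t : (0:ℝ) < 2 * t := by linarith
  have hm2 : m ^ 2 ≤ 1/4 := by
    rw [hmdef, xstar]
    split <;> nlinarith
  have hc : (0:ℝ) ≤ (Real.sqrt (2 * Real.pi * t))⁻¹ := by positivity
  -- termwise bound
  have hterm : ∀ k : ℤ, p t (m + k) ≤ Real.exp (-(((k : ℝ)) ^ 2 - 1) / 8) * p t m := by
    intro k
    have hexp : -((m + (k:ℝ)) ^ 2) / (2 * t) ≤
        -(((k : ℝ)) ^ 2 - 1) / 8 + -(m ^ 2) / (2 * t) := by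
      rcases eq_or_ne k 0 with rfl | hk
      · simp only [Int.cast_zero, add_zero]
        have : (0:ℝ) ≤ -(0 ^ 2 - 1) / 8 := by norm_num
        push_cast
        linarith
      · have hk1 : (1:ℝ) ≤ |(k : ℝ)| := by
          rw [← Int.cast_abs]
          exact_mod_cast Int.one_le_abs hk
        have hmabs : |m| ≤ 1/2 := by
          rw [abs_le]; constructor <;> nlinarith [sq_nonneg m]
        have habs : |(k:ℝ)| - |m| ≤ |m + (k:ℝ)| := by
          have := abs_sub_abs_le_abs_sub (k:ℝ) (-m)
          simpa [sub_neg_eq_add, add_comm] using this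
        have h1 : ((k:ℝ)) ^ 2 / 4 ≤ (m + (k:ℝ)) ^ 2 := by
          nlinarith [sq_abs (m + (k:ℝ)), sq_abs ((k:ℝ)), abs_nonneg (m + (k:ℝ)),
            abs_nonneg ((k:ℝ))]
        have hk2 : (1:ℝ) ≤ ((k:ℝ)) ^ 2 := by nlinarith [sq_abs ((k:ℝ))]
        have e1 : -((m + (k:ℝ)) ^ 2) / (2 * t) - (-(((k : ℝ)) ^ 2 - 1) / 8 + -(m ^ 2) / (2 * t))
            = (4 * m ^ 2 + t * (((k:ℝ)) ^ 2 - 1) - 4 * (m + (k:ℝ)) ^ 2) / (8 * t) := by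
          field_simp
          ring
        have hnum : 4 * m ^ 2 + t * (((k:ℝ)) ^ 2 - 1) - 4 * (m + (k:ℝ)) ^ 2 ≤ 0 := by
          nlinarith [mul_nonneg (by linarith : (0:ℝ) ≤ 1 - t)
            (by linarith : (0:ℝ) ≤ ((k:ℝ)) ^ 2 - 1)]
        have := div_nonpos_of_nonpos_of_nonneg hnum (by linarith : (0:ℝ) ≤ 8 * t)
        linarith [e1 ▸ this]
    calc p t (m + (k:ℝ)) = (Real.sqrt (2 * Real.pi * t))⁻¹ *
          Real.exp (-((m + (k:ℝ)) ^ 2) / (2 * t)) := rfl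
      _ ≤ (Real.sqrt (2 * Real.pi * t))⁻¹ *
          Real.exp (-(((k : ℝ)) ^ 2 - 1) / 8 + -(m ^ 2) / (2 * t)) := by
          exact mul_le_mul_of_nonneg_left (Real.exp_le_exp.2 hexp) hc
      _ = Real.exp (-(((k : ℝ)) ^ 2 - 1) / 8) * p t m := by
          rw [Real.exp_add, p]; ring
  have hpnonneg : ∀ k : ℤ, 0 ≤ p t (m + k) := by
    intro k; rw [p]; positivity
  have hRsum : Summable (fun k : ℤ => Real.exp (-(((k : ℝ)) ^ 2 - 1) / 8) * p t m) :=
    summable_aux.mul_right _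
  have hLsum : Summable (fun k : ℤ => p t (m + k)) :=
    hRsum.of_nonneg_of_le hpnonneg hterm
  have hGeq : G t x = ∑' k : ℤ, p t (m + k) := by
    by_cases h : x ≤ 1/2
    · rw [G, hmdef, xstar, if_pos h]
    · rw [G, hmdef, xstar, if_neg h]
      have hre : ∀ k : ℤ, p t (x + k) = p t ((x - 1) + ((k + 1 : ℤ) : ℝ)) := by
        intro k; congr 1; push_cast; ring
      calc (∑' k : ℤ, p t (x + k)) = ∑' k : ℤ, p t ((x - 1) + ((Equiv.addRight (1:ℤ)) k : ℝ)) := by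
            exact tsum_congr hre
        _ = ∑' k : ℤ, p t ((x - 1) + (k : ℝ)) :=
            (Equiv.addRight (1:ℤ)).tsum_eq (fun k : ℤ => p t ((x - 1) + (k : ℝ)))
  rw [hGeq]
  calc (∑' k : ℤ, p t (m + k)) ≤ ∑' k : ℤ, Real.exp (-(((k : ℝ)) ^ 2 - 1) / 8) * p t m :=
        Summable.tsum_le_tsum hterm hLsum hRsum
    _ = (∑' k : ℤ, Real.exp (-(((k : ℝ)) ^ 2 - 1) / 8)) * p t m := tsum_mul_right
    _ = (∑' k : ℤ, Real.exp (-(((k : ℝ)) ^ 2 - 1) / 8)) * p t (xstar x) := by rw [hmdef]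
end

section
/- Fix c₀ > 0 and θ ∈ (0,1/2). There exist constants C, δ₀ > 0 depending on c₀ such that for all 0 < δ < δ₀ and all 0 < s ≤ 2c₀δ², the heat kernel on the torus satisfies G(s,0) - G(s,δ) ≥ C/√s. -/
open MeasureTheory Real

lemma geom_int_hasSum {r : ℝ} (h0 : 0 ≤ r) (h1 : r < 1) :
    HasSum (fun k : ℤ => if k = 0 then (0:ℝ) else r ^ k.natAbs)
      (r * (1 - r)⁻¹ + r * (1 - r)⁻¹) := by
  set f : ℤ → ℝ := fun k => if k = 0 then (0:ℝ) else r ^ k.natAbs with hf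
  have hg : HasSum (fun n : ℕ => r * r ^ n) (r * (1 - r)⁻¹) :=
    (hasSum_geometric_of_lt_one h0 h1).mul_left r
  have hpos : HasSum (fun n : ℕ => f n) (r * (1 - r)⁻¹) := by
    rw [← Function.Injective.hasSum_iff Nat.succ_injective ?_]
    · convert hg using 1
      funext n
      simp only [Function.comp, f, Nat.succ_eq_add_one]
      rw [if_neg (by exact_mod_cast Nat.succ_ne_zero n)]
      rw [show ((↑(n + 1) : ℤ)).natAbs = n + 1 by omega]
      simp [pow_succ, mul_comm]
    · intro x hx
      have hx0 : x = 0 := by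
        rcases x with _ | n
        · rfl
        · exact absurd ⟨n, rfl⟩ hx
      simp [f, hx0]
  have hneg : HasSum (fun n : ℕ => f (-(n + 1))) (r * (1 - r)⁻¹) := by
    convert hg using 1
    funext n
    simp only [f]
    rw [if_neg (by omega)]
    rw [show ((-(↑n + 1) : ℤ)).natAbs = n + 1 by omega]
    simp [pow_succ, mul_comm]
  exact hpos.of_nat_of_neg_add_one hneg

lemma p_nonneg' (t x : ℝ) : 0 ≤ p t x := by unfold p; positivity

lemma sq_quarter_le {x : ℝ} (hx0 : 0 ≤ x) (hx : x ≤ 1/2) (k : ℤ) (hk : k ≠ 0) :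
    ((k:ℝ))^2/4 ≤ (x + k)^2 := by
  have h1 : (1:ℝ) ≤ |(k:ℝ)| := by
    have := Int.one_le_abs hk
    exact_mod_cast this
  rcases le_abs.mp h1 with h | h
  · nlinarith
  · nlinarith

lemma p_le' {t x : ℝ} (ht : 0 < t) (hx0 : 0 ≤ x) (hx : x ≤ 1/2) (k : ℤ) :
    p t (x + k) ≤ (Real.sqrt (2*Real.pi*t))⁻¹ * (Real.exp (-(1/(8*t))))^k.natAbs := by
  unfold p
  apply mul_le_mul_of_nonneg_left _ (by positivity)
  rcases eq_or_ne k 0 with rfl | hk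
  · simp only [Int.natAbs_zero, pow_zero]
    rw [← Real.exp_zero]
    exact Real.exp_le_exp.mpr (div_nonpos_of_nonpos_of_nonneg (neg_nonpos.mpr (by positivity)) (by positivity))
  · rw [← Real.exp_nat_mul]
    apply Real.exp_le_exp.mpr
    have hsq : ((k:ℝ))^2/4 ≤ (x + k)^2 := sq_quarter_le hx0 hx k hk
    have hcast : ((k:ℝ))^2 = ((k.natAbs:ℝ))^2 := by
      rw [Nat.cast_natAbs]; push_cast; rw [sq_abs]
    have h1 : (1:ℝ) ≤ (k.natAbs:ℝ) := by exact_mod_cast (by omega : 1 ≤ k.natAbs)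
    have hna : (k.natAbs : ℝ) ≤ ((k:ℝ))^2 := by rw [hcast]; nlinarith
    have key : (k.natAbs:ℝ)/(8*t) ≤ (x+(k:ℝ))^2/(2*t) := by
      rw [div_le_div_iff₀ (by positivity) (by positivity)]
      nlinarith
    have heq : (k.natAbs:ℝ) * -(1/(8*t)) = -((k.natAbs:ℝ)/(8*t)) := by ring
    rw [heq, neg_div]
    exact neg_le_neg key

lemma summable_p' {t x : ℝ} (ht : 0 < t) (hx0 : 0 ≤ x) (hx : x ≤ 1/2) :
    Summable (fun k : ℤ => p t (x + k)) := by
  set r := Real.exp (-(1/(8*t))) with hr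
  have hr0 : 0 ≤ r := (Real.exp_pos _).le
  have hr1 : r < 1 := by
    rw [hr, Real.exp_lt_one_iff]
    have : 0 < 1/(8*t) := by positivity
    linarith
  have hb : Summable (fun k : ℤ => (Real.sqrt (2*Real.pi*t))⁻¹ * r ^ k.natAbs) := by
    apply Summable.mul_left
    apply Summable.of_nat_of_neg_add_one
    · simpa using summable_geometric_of_lt_one hr0 hr1
    · have h2 := (summable_geometric_of_lt_one hr0 hr1).mul_left r
      convert h2 using 1
      funext n
      rw [show ((-(↑n + 1) : ℤ)).natAbs = n + 1 by omega]
      simp [pow_succ, mul_comm]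
  exact Summable.of_nonneg_of_le (fun k => p_nonneg' _ _) (fun k => p_le' ht hx0 hx k) hb

theorem stmt8 (c₀ θ : ℝ) (hc₀ : 0 < c₀) (hθ : θ ∈ Set.Ioo (0:ℝ) (1/2)) :
    ∃ C δ₀ : ℝ, 0 < C ∧ 0 < δ₀ ∧
      ∀ δ : ℝ, 0 < δ → δ < δ₀ → ∀ s : ℝ, 0 < s → s ≤ 2 * c₀ * δ ^ 2 →
        C / Real.sqrt s ≤ G s 0 - G s δ := by
  set c₁ : ℝ := 1 - Real.exp (-(1/(4*c₀))) with hc₁def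
  have hc₁ : 0 < c₁ := by
    have h1 : Real.exp (-(1/(4*c₀))) < 1 := by
      rw [Real.exp_lt_one_iff]
      have : 0 < 1/(4*c₀) := by positivity
      linarith
    simp only [hc₁def]; linarith
  set s₀ : ℝ := min (1/16) (c₁/64) with hs₀def
  have hs₀ : 0 < s₀ := lt_min (by norm_num) (by positivity)
  refine ⟨c₁/(2*Real.sqrt (2*Real.pi)), min (1/2) (Real.sqrt (s₀/(2*c₀))),
    by positivity, lt_min (by norm_num) (Real.sqrt_pos.mpr (by positivity)), ?_⟩
  intro δ hδ0 hδlt s hs0 hsle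
  have hδhalf : δ ≤ 1/2 := le_of_lt (lt_of_lt_of_le hδlt (min_le_left _ _))
  have hδsq : δ^2 < s₀/(2*c₀) := by
    have h1 : δ < Real.sqrt (s₀/(2*c₀)) := lt_of_lt_of_le hδlt (min_le_right _ _)
    have h2 : Real.sqrt (s₀/(2*c₀))^2 = s₀/(2*c₀) := Real.sq_sqrt (by positivity)
    calc δ^2 < Real.sqrt (s₀/(2*c₀))^2 := by nlinarith [Real.sqrt_nonneg (s₀/(2*c₀))]
    _ = s₀/(2*c₀) := h2
  have hss₀ : s < s₀ := by
    calc s ≤ 2*c₀*δ^2 := hsle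
    _ < 2*c₀*(s₀/(2*c₀)) := by nlinarith
    _ = s₀ := by field_simp
  have hs16 : s ≤ 1/16 := le_of_lt (lt_of_lt_of_le hss₀ (min_le_left _ _))
  have hs64 : s ≤ c₁/64 := le_of_lt (lt_of_lt_of_le hss₀ (min_le_right _ _))
  set cs : ℝ := (Real.sqrt (2*Real.pi*s))⁻¹ with hcs
  have hcs0 : 0 < cs := by rw [hcs]; positivity
  have hsum0 : Summable (fun k : ℤ => p s (0 + k)) := summable_p' hs0 le_rfl (by norm_num)
  have hsumδ : Summable (fun k : ℤ => p s (δ + k)) := summable_p' hs0 hδ0.le hδhalf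
  have hG0 : p s 0 ≤ G s 0 := by
    have := Summable.le_tsum hsum0 0 (fun k _ => p_nonneg' _ _)
    simpa [G] using this
  set r : ℝ := Real.exp (-(1/(8*s))) with hrdef
  have hr0 : 0 ≤ r := (Real.exp_pos _).le
  have hr8s : r ≤ 8*s := by
    have h2 : 1/(8*s) ≤ Real.exp (1/(8*s)) := by
      have := Real.add_one_le_exp (1/(8*s))
      linarith
    have h3 : (Real.exp (1/(8*s)))⁻¹ ≤ (1/(8*s))⁻¹ :=
      inv_anti₀ (by positivity) h2
    rw [hrdef, Real.exp_neg]
    calc (Real.exp (1/(8*s)))⁻¹ ≤ (1/(8*s))⁻¹ := h3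
    _ = 8*s := by field_simp
  have hrhalf : r ≤ 1/2 := le_trans hr8s (by linarith)
  have hr1 : r < 1 := lt_of_le_of_lt hrhalf (by norm_num)
  set T := ∑' k : ℤ, if k = 0 then (0:ℝ) else p s (δ + k) with hT
  have hGδ : G s δ = p s δ + T := by
    have := Summable.tsum_eq_add_tsum_ite hsumδ 0
    simpa [G, hT] using this
  have hsumT : Summable (fun k : ℤ => if k = 0 then (0:ℝ) else p s (δ + k)) := by
    apply Summable.of_nonneg_of_le (fun k => ?_) (fun k => ?_) hsumδ
    · by_cases hk : k = 0 <;> simp [hk, p_nonneg']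
    · by_cases hk : k = 0 <;> simp [hk, p_nonneg']
  have hgsum : HasSum (fun k : ℤ => if k = 0 then (0:ℝ) else r ^ k.natAbs)
      (r*(1-r)⁻¹ + r*(1-r)⁻¹) := geom_int_hasSum hr0 hr1
  have hTle : T ≤ cs * (r*(1-r)⁻¹ + r*(1-r)⁻¹) := by
    rw [hT, ← hgsum.tsum_eq, ← tsum_mul_left]
    apply Summable.tsum_le_tsum _ hsumT (hgsum.summable.mul_left cs)
    intro k
    by_cases hk : k = 0
    · simp [hk]
    · simp only [if_neg hk]
      exact p_le' hs0 hδ0.le hδhalf k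
  have hrin : (1-r)⁻¹ ≤ 2 := by
    have h12 : (1:ℝ)/2 ≤ 1 - r := by linarith
    calc (1-r)⁻¹ ≤ ((1:ℝ)/2)⁻¹ := inv_anti₀ (by norm_num) h12
    _ = 2 := by norm_num
  have hT2 : T ≤ cs * (c₁/2) := by
    have hb : r*(1-r)⁻¹ + r*(1-r)⁻¹ ≤ 4*r := by nlinarith
    have h4r : 4*r ≤ c₁/2 := by nlinarith
    calc T ≤ cs * (r*(1-r)⁻¹ + r*(1-r)⁻¹) := hTle
    _ ≤ cs * (c₁/2) := by apply mul_le_mul_of_nonneg_left _ hcs0.le; linarith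
  have hmain : cs * c₁ ≤ p s 0 - p s δ := by
    have h0 : p s 0 = cs := by unfold p; rw [hcs]; norm_num
    have hδe : p s δ = cs * Real.exp (-(δ^2)/(2*s)) := by unfold p; rw [hcs]
    have hee : Real.exp (-(δ^2)/(2*s)) ≤ Real.exp (-(1/(4*c₀))) := by
      apply Real.exp_le_exp.mpr
      rw [neg_div, neg_le_neg_iff, div_le_div_iff₀ (by positivity) (by positivity)]
      nlinarith
    have hmul := mul_le_mul_of_nonneg_left hee hcs0.le
    rw [h0, hδe, hc₁def]
    linarith [hmul]
  clear_value T r cs s₀ c₁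
  have hcomb : cs * c₁ - cs * (c₁/2) ≤ G s 0 - G s δ := by
    rw [hGδ]; linarith
  have hsqrt : Real.sqrt (2*Real.pi*s) = Real.sqrt (2*Real.pi) * Real.sqrt s :=
    Real.sqrt_mul (by positivity) s
  have hCval : c₁/(2*Real.sqrt (2*Real.pi)) / Real.sqrt s = cs * (c₁/2) := by
    rw [hcs, hsqrt, mul_inv]
    ring
  rw [hCval]
  linarith
end

section
/- Let B be a standard one-dimensional Brownian motion started at 0, let M₀ ∈ ℝ, and let 0 < a < b and λ > 0. Then P(inf_{a ≤ t ≤ b} |M₀ + B_t| ≤ λ) ≤ P(inf_{a ≤ t ≤ b} |B_t| ≤ λ). -/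
open MeasureTheory ProbabilityTheory

/-- A standard one-dimensional Brownian motion started at `0`: measurable marginals,
`B 0 = 0` a.s., a.s. continuous paths, Gaussian increments `B t - B s ~ N(0, t-s)`,
and independent increments. -/
structure IsStandardBrownianMotion {Ω : Type*} [MeasurableSpace Ω]
    (P : Measure Ω) (B : ℝ → Ω → ℝ) : Prop where
  measurable : ∀ t, Measurable (B t)
  init : ∀ᵐ ω ∂P, B 0 ω = 0
  cont : ∀ᵐ ω ∂P, Continuous fun t => B t ω
  gauss_incr : ∀ s t : ℝ, 0 ≤ s → s ≤ t →
    P.map (fun ω => B t ω - B s ω) = gaussianReal 0 ((t - s).toNNReal)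
  indep_incr : ∀ (n : ℕ) (τ : Fin (n + 1) → ℝ), Monotone τ → (∀ i, 0 ≤ τ i) →
    iIndepFun
      (fun i : Fin n => fun ω => B (τ i.succ) ω - B (τ i.castSucc) ω) P

open Set
open scoped NNReal

/-!
Write `B t = B a + (B t - B a)`: the Gaussian variable `B a ~ N(0, a)` is independent of the
increments after time `a`. On a set of times `D ∋ a`, `B` stays above `r` exactly when
`B a ≥ r + S`, where `S = sup_{t ∈ D} (B a - B t) ≥ 0` depends only on these increments, and
the Gaussian tail `c ↦ P(N ≥ c)` is midpoint convex on `[0, ∞)` (reflect the density about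
`c`). Hence `Q r = P(∀ t ∈ D, r ≤ B t)` satisfies `2 Q μ ≤ Q (μ - M) + Q (μ + M)`. By the
symmetry `B ↦ -B`, the probability that `M + B` enters `(-μ, μ)` at some time of `D` is
`1 - Q (μ - M) - Q (μ + M)`, which is therefore largest for `M = 0`. Continuity of the paths
reduces times in `[a, b]` to a countable dense set, and the closed condition `≤ λ` to the open
conditions `< μ`, `μ ↓ λ`.
-/

lemma IsPreconnected.exists_mem_Ioo_iff {X : Type*} [TopologicalSpace X] {s D : Set X}
    (hs : IsPreconnected s) (hDs : D ⊆ s) (hsD : s ⊆ closure D) {f : X → ℝ} (hf : Continuous f)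
    {c d : ℝ} (hcd : c < d) :
    (∃ t ∈ s, f t ∈ Ioo c d) ↔ (∃ t ∈ D, f t < d) ∧ ∃ t ∈ D, c < f t := by
  constructor
  · rintro ⟨t, hts, htcd⟩
    obtain ⟨u, hu, huD⟩ := mem_closure_iff_nhds.1 (hsD hts) _
      (hf.continuousAt.preimage_mem_nhds (isOpen_Ioo.mem_nhds htcd))
    exact ⟨⟨u, huD, hu.2⟩, ⟨u, huD, hu.1⟩⟩
  · rintro ⟨⟨t, htD, ht⟩, ⟨u, huD, hu⟩⟩
    rcases lt_or_ge c (f t) with htc | htc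
    · exact ⟨t, hDs htD, htc, ht⟩
    rcases lt_or_ge (f u) d with hud | hud
    · exact ⟨u, hDs huD, hu, hud⟩
    obtain ⟨z, hzs, hz⟩ := hs.intermediate_value (hDs htD) (hDs huD) hf.continuousOn
      (show (c + d) / 2 ∈ Icc (f t) (f u) by constructor <;> linarith)
    exact ⟨z, hzs, by rw [hz]; constructor <;> linarith⟩

lemma IsCompact.exists_le_of_forall_lt_add {X : Type*} [TopologicalSpace X] {s : Set X}
    (hs : IsCompact s) {f : X → ℝ} (hf : ContinuousOn f s) {l : ℝ}
    (h : ∀ ε > 0, ∃ t ∈ s, f t < l + ε) : ∃ t ∈ s, f t ≤ l := by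
  obtain ⟨t₀, ht₀, -⟩ := h 1 one_pos
  obtain ⟨m, hms, hmin⟩ := hs.exists_isMinOn ⟨t₀, ht₀⟩ hf
  refine ⟨m, hms, le_of_forall_pos_lt_add fun ε hε => ?_⟩
  obtain ⟨t, hts, ht⟩ := h ε hε
  exact (hmin hts).trans_lt ht

lemma measure_exists_le_le_of_forall_lt {Ω X : Type*} [MeasurableSpace Ω] [TopologicalSpace X]
    {P : Measure Ω} [IsFiniteMeasure P] {s : Set X} (hs : IsCompact s) {F G : X → Ω → ℝ}
    (hG : ∀ᵐ ω ∂P, Continuous fun t => G t ω) {l : ℝ}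
    (hGm : ∀ μ > l, NullMeasurableSet {ω | ∃ t ∈ s, G t ω < μ} P)
    (h : ∀ μ > l, P {ω | ∃ t ∈ s, F t ω < μ} ≤ P {ω | ∃ t ∈ s, G t ω < μ}) :
    P {ω | ∃ t ∈ s, F t ω ≤ l} ≤ P {ω | ∃ t ∈ s, G t ω ≤ l} := by
  set U : ℕ → Set Ω := fun n => {ω | ∃ t ∈ s, G t ω < l + 1 / (n + 1)}
  have hU : Antitone U := by
    rintro m n hmn ω ⟨t, hts, ht⟩
    exact ⟨t, hts, ht.trans_le (by gcongr)⟩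
  have hpos : ∀ n : ℕ, l < l + 1 / (n + 1) := fun n => lt_add_of_pos_right l (by positivity)
  calc P {ω | ∃ t ∈ s, F t ω ≤ l} ≤ ⨅ n, P (U n) := by
        refine le_iInf fun n => (measure_mono ?_).trans (h _ (hpos n))
        rintro ω ⟨t, hts, ht⟩
        exact ⟨t, hts, ht.trans_lt (hpos n)⟩
    _ = P (⋂ n, U n) := (hU.measure_iInter (fun n => hGm _ (hpos n)) ⟨0, measure_ne_top _ _⟩).symm
    _ ≤ P {ω | ∃ t ∈ s, G t ω ≤ l} := by
        refine measure_mono_ae ?_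
        filter_upwards [hG] with ω hω hωU
        refine hs.exists_le_of_forall_lt_add hω.continuousOn fun ε hε => ?_
        obtain ⟨n, hn⟩ := exists_nat_one_div_lt hε
        obtain ⟨t, hts, ht⟩ := mem_iInter.1 hωU n
        exact ⟨t, hts, ht.trans (by linarith)⟩

section GaussianTail

variable {v : ℝ≥0}

lemma gaussianPDFReal_le_of_abs_sub_le {μ x y : ℝ} (h : |y - μ| ≤ |x - μ|) :
    gaussianPDFReal μ v x ≤ gaussianPDFReal μ v y := by
  refine mul_le_mul_of_nonneg_left (Real.exp_le_exp.2 ?_) (by positivity)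
  exact div_le_div_of_nonneg_right (neg_le_neg (sq_le_sq.2 h)) (by positivity)

lemma gaussianReal_Ico_le_Ico_sub (hv : v ≠ 0) {c x : ℝ} (hc : 0 ≤ c) :
    gaussianReal 0 v (Ico c (c + x)) ≤ gaussianReal 0 v (Ico (c - x) c) := by
  have hpre : (fun t => 2 * c - t) ⁻¹' Ioc (c - x) c = Ico c (c + x) := by
    ext t; simp only [mem_preimage, mem_Ioc, mem_Ico]; constructor <;> rintro ⟨h₁, h₂⟩ <;>
      constructor <;> linarith
  rw [gaussianReal_apply _ hv, gaussianReal_apply _ hv]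
  calc ∫⁻ t in Ico c (c + x), gaussianPDF 0 v t
      ≤ ∫⁻ t in Ico c (c + x), gaussianPDF 0 v (2 * c - t) := by
        refine setLIntegral_mono' measurableSet_Ico fun t ht => ENNReal.ofReal_le_ofReal ?_
        refine gaussianPDFReal_le_of_abs_sub_le ?_
        rw [sub_zero, sub_zero, abs_of_nonneg (hc.trans ht.1), abs_le]
        constructor <;> linarith [ht.1]
    _ = ∫⁻ t in Ioc (c - x) c, gaussianPDF 0 v t := by
        rw [← hpre]
        exact (volume.measurePreserving_sub_left (2 * c)).setLIntegral_comp_preimage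
          measurableSet_Ioc (measurable_gaussianPDF 0 v)
    _ = ∫⁻ t in Ico (c - x) c, gaussianPDF 0 v t := setLIntegral_congr Ico_ae_eq_Ioc.symm

lemma two_mul_gaussianReal_Ici_le (hv : v ≠ 0) {c : ℝ} (hc : 0 ≤ c) (x : ℝ) :
    2 * gaussianReal 0 v (Ici c)
      ≤ gaussianReal 0 v (Ici (c - x)) + gaussianReal 0 v (Ici (c + x)) := by
  wlog hx : 0 ≤ x generalizing x
  · convert this (-x) (by linarith) using 1
    rw [add_comm, sub_neg_eq_add, sub_eq_add_neg]
  set γ := gaussianReal 0 v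
  have hsplit : ∀ {u w : ℝ}, u ≤ w → γ (Ici u) = γ (Ico u w) + γ (Ici w) := fun h => by
    rw [← measure_union (Iio_disjoint_Ici le_rfl |>.mono_left Ico_subset_Iio_self)
      measurableSet_Ici, Ico_union_Ici_eq_Ici h]
  calc 2 * γ (Ici c) = γ (Ici c) + (γ (Ico c (c + x)) + γ (Ici (c + x))) := by
        rw [two_mul, ← hsplit (by linarith)]
    _ ≤ γ (Ici c) + (γ (Ico (c - x) c) + γ (Ici (c + x))) := by
        gcongr _ + (?_ + _)
        exact gaussianReal_Ico_le_Ico_sub hv hc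
    _ = γ (Ici (c - x)) + γ (Ici (c + x)) := by
        rw [hsplit (show c - x ≤ c by linarith)]; ring

lemma two_mul_gaussianReal_setOf_forall_le_add (hv : v ≠ 0) {ι : Type*} {w : ι → ℝ}
    (hw : ∃ i, w i ≤ 0) {r : ℝ} (hr : 0 ≤ r) (x : ℝ) :
    2 * gaussianReal 0 v {g | ∀ i, r ≤ g + w i}
      ≤ gaussianReal 0 v {g | ∀ i, r - x ≤ g + w i}
        + gaussianReal 0 v {g | ∀ i, r + x ≤ g + w i} := by
  obtain ⟨i₀, hi₀⟩ := hw
  by_cases hbdd : BddAbove (range fun i => -w i)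
  · have : Nonempty ι := ⟨i₀⟩
    set s := ⨆ i, -w i
    have hs : 0 ≤ s := (neg_nonneg.2 hi₀).trans (le_ciSup hbdd i₀)
    have hset : ∀ r', {g | ∀ i, r' ≤ g + w i} = Ici (r' + s) := fun r' => by
      ext g
      simp only [mem_ofPred_eq, mem_Ici, ← le_sub_iff_add_le', s, ciSup_le_iff hbdd]
      exact forall_congr' fun i => by constructor <;> intro h <;> linarith
    simp only [hset]
    convert two_mul_gaussianReal_Ici_le hv (c := r + s) (by positivity) x using 4 <;> ring
  · have hempty : ∀ r', {g | ∀ i, r' ≤ g + w i} = ∅ := fun r' => by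
      refine eq_empty_of_forall_notMem fun g hg => hbdd ⟨g - r', ?_⟩
      rintro _ ⟨i, rfl⟩
      linarith [hg i]
    simp [hempty]

end GaussianTail

lemma ProbabilityTheory.IndepFun.two_mul_measure_forall_le_add {Ω ι : Type*} [MeasurableSpace Ω]
    {P : Measure Ω} [IsProbabilityMeasure P] [Countable ι] {W : Ω → ι → ℝ} {G : Ω → ℝ}
    {v : ℝ≥0} (hWG : IndepFun W G P) (hW : AEMeasurable W P) (hG : HasLaw G (gaussianReal 0 v) P)
    (hv : v ≠ 0) (hW₀ : ∀ ω, ∃ i, W ω i ≤ 0) {r : ℝ} (hr : 0 ≤ r) (x : ℝ) :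
    2 * P {ω | ∀ i, r ≤ G ω + W ω i}
      ≤ P {ω | ∀ i, r - x ≤ G ω + W ω i} + P {ω | ∀ i, r + x ≤ G ω + W ω i} := by
  have hprod := (indepFun_iff_map_prod_eq_prod_map_map hW hG.aemeasurable).1 hWG
  set S : ℝ → Set ((ι → ℝ) × ℝ) := fun r' => {p | ∀ i, r' ≤ p.2 + p.1 i}
  have hS : ∀ r', MeasurableSet (S r') := fun r' => by
    simp only [S, ofPred_forall]
    exact .iInter fun i => measurableSet_le measurable_const (by fun_prop)
  have hlaw : ∀ r', P {ω | ∀ i, r' ≤ G ω + W ω i}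
      = ∫⁻ ω, gaussianReal 0 v {g | ∀ i, r' ≤ g + W ω i} ∂P := fun r' => by
    calc P {ω | ∀ i, r' ≤ G ω + W ω i} = P.map (fun ω => (W ω, G ω)) (S r') :=
          (Measure.map_apply_of_aemeasurable (hW.prodMk hG.aemeasurable) (hS r')).symm
      _ = ∫⁻ w, gaussianReal 0 v (Prod.mk w ⁻¹' S r') ∂P.map W := by
          rw [hprod, Measure.prod_apply (hS r'), hG.map_eq]
      _ = ∫⁻ ω, gaussianReal 0 v {g | ∀ i, r' ≤ g + W ω i} ∂P :=
          lintegral_map' (measurable_measure_prodMk_left (hS r')).aemeasurable hW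
  have hmeas : ∀ r', AEMeasurable (fun ω => gaussianReal 0 v {g | ∀ i, r' ≤ g + W ω i}) P :=
    fun r' => (measurable_measure_prodMk_left (hS r')).comp_aemeasurable hW
  rw [hlaw, hlaw, hlaw, ← lintegral_const_mul' _ _ ENNReal.ofNat_ne_top,
    ← lintegral_add_left' (hmeas _)]
  exact lintegral_mono fun ω => two_mul_gaussianReal_setOf_forall_le_add hv (hW₀ ω) hr x

namespace IsStandardBrownianMotion

variable {Ω : Type*} [MeasurableSpace Ω] {P : Measure Ω} {B : ℝ → Ω → ℝ} {D : Set ℝ}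

lemma hasLaw (hB : IsStandardBrownianMotion P B) {t : ℝ} (ht : 0 ≤ t) :
    HasLaw (B t) (gaussianReal 0 t.toNNReal) P where
  aemeasurable := (hB.measurable t).aemeasurable
  map_eq := by
    have : (fun ω => B t ω - B 0 ω) =ᵐ[P] B t := by
      filter_upwards [hB.init] with ω hω
      rw [hω, sub_zero]
    rw [← Measure.map_congr this, hB.gauss_incr 0 t le_rfl ht, sub_zero]

lemma isPreBrownianReal (hB : IsStandardBrownianMotion P B) :
    IsPreBrownianReal (fun t : ℝ≥0 => B t) P :=
  HasIndepIncrements.isPreBrownianReal_of_hasLaw (fun t => by simpa using hB.hasLaw t.2)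
    fun n t ht => hB.indep_incr n (fun i => t i) (fun _ _ h => ht h) fun i => (t i).2

lemma map_neg_eq_map (hB : IsStandardBrownianMotion P B) [IsProbabilityMeasure P]
    (hD : D ⊆ Ici 0) :
    P.map (fun ω (t : D) => -B t ω) = P.map (fun ω (t : D) => B t ω) := by
  have hB' := hB.isPreBrownianReal
  have hX : Measurable fun ω (t : ℝ≥0) => B t ω := measurable_pi_lambda _ fun t => hB.measurable t
  have hX' : Measurable fun ω (t : ℝ≥0) => -B t ω :=
    measurable_pi_lambda _ fun t => (hB.measurable t).neg
  have hlaw : P.map (fun ω (t : ℝ≥0) => -B t ω) = P.map (fun ω (t : ℝ≥0) => B t ω) :=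
    (map_eq_iff_forall_finset_map_restrict_eq hX'.aemeasurable hX.aemeasurable).2 fun I =>
      (hB'.neg.hasLaw I).map_eq.trans (hB'.hasLaw I).map_eq.symm
  have hπ : Measurable fun (y : ℝ≥0 → ℝ) (t : D) => y ⟨t, hD t.2⟩ := by fun_prop
  calc P.map (fun ω (t : D) => -B t ω) = (P.map fun ω (t : ℝ≥0) => -B t ω).map _ := by
        rw [Measure.map_map hπ hX']; rfl
    _ = P.map (fun ω (t : D) => B t ω) := by rw [hlaw, Measure.map_map hπ hX]; rfl

lemma indepFun_sub (hB : IsStandardBrownianMotion P B) {a : ℝ} (ha : 0 ≤ a) (hD : D ⊆ Ici a) :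
    IndepFun (fun ω (t : D) => B t ω - B a ω) (B a) P := by
  have hφ : Measurable fun (w : ℝ≥0 → ℝ) (t : D) => w ⟨t - a, sub_nonneg.2 (hD t.2)⟩ := by
    fun_prop
  have hψ : Measurable fun (y : Iic (⟨a, ha⟩ : ℝ≥0) → ℝ) => y ⟨⟨a, ha⟩, mem_Iic.2 le_rfl⟩ := by
    fun_prop
  convert (hB.isPreBrownianReal.indepFun_shift ⟨a, ha⟩).comp hφ hψ using 1
  · funext ω t
    exact congrArg (B · ω - B a ω) (add_sub_cancel a t).symm
  · rfl

lemma measurableSet_exists_lt_and_exists_gt (hB : IsStandardBrownianMotion P B)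
    (hD : D.Countable) (c d : ℝ) :
    MeasurableSet {ω | (∃ t ∈ D, B t ω < d) ∧ ∃ t ∈ D, c < B t ω} := by
  simp_rw [ofPred_and, ← exists_prop, ofPred_exists]
  exact (MeasurableSet.biUnion hD fun t _ =>
    measurableSet_lt (hB.measurable t) measurable_const).inter
    (.biUnion hD fun t _ => measurableSet_lt measurable_const (hB.measurable t))

lemma exists_abs_add_lt_ae_eq (hB : IsStandardBrownianMotion P B) {s : Set ℝ}
    (hs : IsPreconnected s) (hDs : D ⊆ s) (hsD : s ⊆ closure D) (M : ℝ) {μ : ℝ} (hμ : 0 < μ) :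
    {ω | ∃ t ∈ s, |M + B t ω| < μ}
      =ᵐ[P] {ω | (∃ t ∈ D, B t ω < μ - M) ∧ ∃ t ∈ D, -μ - M < B t ω} := by
  have hcd : -μ - M < μ - M := by linarith
  filter_upwards [hB.cont] with ω hω
  refine propext (Iff.trans ?_ (hs.exists_mem_Ioo_iff hDs hsD hω hcd))
  show (∃ t ∈ s, |M + B t ω| < μ) ↔ _
  refine exists_congr fun t => and_congr_right fun _ => ?_
  rw [abs_lt, mem_Ioo]
  constructor <;> rintro ⟨h₁, h₂⟩ <;> constructor <;> linarith

lemma two_mul_measure_forall_le (hB : IsStandardBrownianMotion P B) [IsProbabilityMeasure P]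
    {a : ℝ} (ha : 0 < a) (hD : D.Countable) (haD : a ∈ D) (hDa : D ⊆ Ici a) {r : ℝ} (hr : 0 ≤ r)
    (x : ℝ) :
    2 * P {ω | ∀ t ∈ D, r ≤ B t ω}
      ≤ P {ω | ∀ t ∈ D, r - x ≤ B t ω} + P {ω | ∀ t ∈ D, r + x ≤ B t ω} := by
  have : Countable D := hD.to_subtype
  have hset : ∀ r', {ω | ∀ t ∈ D, r' ≤ B t ω} = {ω | ∀ t : D, r' ≤ B a ω + (B t ω - B a ω)} :=
    fun r' => by simp
  simp only [hset]
  exact (hB.indepFun_sub ha.le hDa).two_mul_measure_forall_le_add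
    (measurable_pi_lambda _ fun t : D => (hB.measurable t).sub (hB.measurable a)).aemeasurable
    (hB.hasLaw ha.le) (by simpa using ha) (fun ω => ⟨⟨a, haD⟩, (sub_self _).le⟩) hr x

/-- The last term is `P (∀ t ∈ D, B t ≤ c)`, by the symmetry `B ↦ -B`. -/
lemma measure_exists_lt_and_exists_gt_add (hB : IsStandardBrownianMotion P B)
    [IsProbabilityMeasure P] (hD : D.Countable) (hD₀ : D ⊆ Ici 0) (hDne : D.Nonempty) {c d : ℝ}
    (hcd : c < d) :
    P {ω | (∃ t ∈ D, B t ω < d) ∧ ∃ t ∈ D, c < B t ω}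
      + (P {ω | ∀ t ∈ D, d ≤ B t ω} + P {ω | ∀ t ∈ D, -c ≤ B t ω}) = 1 := by
  have : Countable D := hD.to_subtype
  have hneg : P {ω | ∀ t ∈ D, -c ≤ B t ω} = P {ω | ∀ t ∈ D, B t ω ≤ c} := by
    have hS : MeasurableSet {y : D → ℝ | ∀ t, -c ≤ y t} := by
      simp only [ofPred_forall]
      exact .iInter fun t => measurableSet_le measurable_const (measurable_pi_apply t)
    have h := congrArg (· {y : D → ℝ | ∀ t, -c ≤ y t}) (hB.map_neg_eq_map hD₀)
    rw [Measure.map_apply (measurable_pi_lambda (fun ω (t : D) => -B t ω)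
      fun t => (hB.measurable t).neg) hS, Measure.map_apply (measurable_pi_lambda
      (fun ω (t : D) => B t ω) fun t => hB.measurable t) hS] at h
    convert h.symm using 2 <;> simp
  have hcompl : {ω | (∃ t ∈ D, B t ω < d) ∧ ∃ t ∈ D, c < B t ω}
      = ({ω | ∀ t ∈ D, d ≤ B t ω} ∪ {ω | ∀ t ∈ D, B t ω ≤ c})ᶜ := by
    ext ω; simp
  have hdisj : Disjoint {ω | ∀ t ∈ D, d ≤ B t ω} {ω | ∀ t ∈ D, B t ω ≤ c} := by
    obtain ⟨t, ht⟩ := hDne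
    refine disjoint_left.2 fun ω h₁ h₂ => ?_
    linarith [h₁ t ht, h₂ t ht]
  have hmeas₁ : MeasurableSet {ω | ∀ t ∈ D, d ≤ B t ω} := by
    simp only [ofPred_forall]
    exact .biInter hD fun t _ => measurableSet_le measurable_const (hB.measurable t)
  have hmeas₂ : MeasurableSet {ω | ∀ t ∈ D, B t ω ≤ c} := by
    simp only [ofPred_forall]
    exact .biInter hD fun t _ => measurableSet_le (hB.measurable t) measurable_const
  rw [hneg, ← measure_union hdisj hmeas₂, hcompl, add_comm]
  exact prob_add_prob_compl (hmeas₁.union hmeas₂)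

lemma measure_exists_lt_and_exists_gt_le (hB : IsStandardBrownianMotion P B)
    [IsProbabilityMeasure P] {a : ℝ} (ha : 0 < a) (hD : D.Countable) (haD : a ∈ D)
    (hDa : D ⊆ Ici a) {μ : ℝ} (hμ : 0 < μ) (M : ℝ) :
    P {ω | (∃ t ∈ D, B t ω < μ - M) ∧ ∃ t ∈ D, -μ - M < B t ω}
      ≤ P {ω | (∃ t ∈ D, B t ω < μ) ∧ ∃ t ∈ D, -μ < B t ω} := by
  have hD₀ : D ⊆ Ici 0 := hDa.trans (Ici_subset_Ici.2 ha.le)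
  have hM := hB.measure_exists_lt_and_exists_gt_add hD hD₀ ⟨a, haD⟩
    (show -μ - M < μ - M by linarith)
  have h₀ := hB.measure_exists_lt_and_exists_gt_add hD hD₀ ⟨a, haD⟩ (neg_lt_self hμ)
  rw [show -(-μ - M) = μ + M by ring] at hM
  rw [neg_neg] at h₀
  refine ENNReal.le_of_add_le_add_right (a := P {ω | ∀ t ∈ D, μ - M ≤ B t ω}
    + P {ω | ∀ t ∈ D, μ + M ≤ B t ω}) (by finiteness) (hM.trans_le (h₀.symm.trans_le ?_))
  rw [← two_mul]
  gcongr
  exact hB.two_mul_measure_forall_le ha hD haD hDa hμ.le M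

end IsStandardBrownianMotion

theorem stmt18 {Ω : Type*} [MeasurableSpace Ω] (P : Measure Ω) [IsProbabilityMeasure P]
    (B : ℝ → Ω → ℝ) (hB : IsStandardBrownianMotion P B)
    (M₀ a b lam : ℝ) (ha : 0 < a) (hab : a < b) (hlam : 0 < lam) :
    P {ω | ∃ t ∈ Set.Icc a b, |M₀ + B t ω| ≤ lam}
      ≤ P {ω | ∃ t ∈ Set.Icc a b, |B t ω| ≤ lam} := by
  obtain ⟨D, hDs, hDc, hsD⟩ :=
    (TopologicalSpace.IsSeparable.of_separableSpace (Icc a b)).exists_countable_dense_subset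
  have haDs : insert a D ⊆ Icc a b := insert_subset ⟨le_rfl, hab.le⟩ hDs
  have hsaD : Icc a b ⊆ closure (insert a D) := hsD.trans (closure_mono (subset_insert a D))
  have hE := fun M μ (hμ : lam < μ) =>
    hB.exists_abs_add_lt_ae_eq isPreconnected_Icc haDs hsaD M (hlam.trans hμ)
  have hE₀ : ∀ μ > lam, {ω | ∃ t ∈ Icc a b, |B t ω| < μ}
      =ᵐ[P] {ω | (∃ t ∈ insert a D, B t ω < μ) ∧ ∃ t ∈ insert a D, -μ < B t ω} :=
    fun μ hμ => by simpa only [zero_add, sub_zero] using hE 0 μ hμ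
  refine measure_exists_le_le_of_forall_lt (F := fun t ω => |M₀ + B t ω|) isCompact_Icc
    (hB.cont.mono fun ω h => h.abs) (fun μ hμ => ?_) fun μ hμ => ?_
  · exact (hB.measurableSet_exists_lt_and_exists_gt (hDc.insert a) _ _).nullMeasurableSet.congr
      (hE₀ μ hμ).symm
  · rw [measure_congr (hE M₀ μ hμ), measure_congr (hE₀ μ hμ)]
    exact hB.measure_exists_lt_and_exists_gt_le ha (hDc.insert a) (mem_insert a D)
      (haDs.trans Icc_subset_Ici_self) (hlam.trans hμ) M₀
end
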